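/- Let d ≥ 2, α ∈ (0,2), let D ⊂ ℝ^d be nonempty, open, bounded and strictly convex, and let φ : closure(D) → ℝ be continuous and twice continuously differentiable on D. Then: (i) for every x ∈ D, the function z ↦ [ φ(Λ(x, x+z)) − φ(x) − (z·∇φ(x)) 1_{|z|<1} ] |z|^{−d−α} is Lebesgue-integrable on ℝ^d; (ii) the function x ↦ 𝓛φ(x) is continuous on D; (iii) for every a ∈ (0,∞), replacing the truncation 1_{|z|<1} by 1_{|z|<a} in the integrand leaves the value of 𝓛φ(x) unchanged for every x ∈ D. -/

import Mathlib

open MeasureTheory Metric Set Bornology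
open scoped RealInnerProductSpace

noncomputable section

/-- `lamT D y z` is the largest `t ∈ [0,1]` such that `y + t • (z - y) ∈ closure D`. -/
def lamT {d : ℕ} (D : Set (EuclideanSpace ℝ (Fin d)))
    (y z : EuclideanSpace ℝ (Fin d)) : ℝ :=
  sSup {t : ℝ | t ∈ Set.Icc (0 : ℝ) 1 ∧ y + t • (z - y) ∈ closure D}

/-- The cutoff map `Λ`. -/
def Lam {d : ℕ} (D : Set (EuclideanSpace ℝ (Fin d)))
    (y z : EuclideanSpace ℝ (Fin d)) : EuclideanSpace ℝ (Fin d) :=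
  y + lamT D y z • (z - y)

/-- The fractional operator `𝓛φ(x)` with truncation level `a` in the gradient term:
`𝓛φ(x) = ∫_{ℝ^d} [φ(Λ(x,x+z)) − φ(x) − (z·∇φ(x)) 1_{|z|<a}] |z|^{−d−α} dz`. -/
def Lgen {d : ℕ} (D : Set (EuclideanSpace ℝ (Fin d))) (α a : ℝ)
    (φ : EuclideanSpace ℝ (Fin d) → ℝ) (x : EuclideanSpace ℝ (Fin d)) : ℝ :=
  ∫ z : EuclideanSpace ℝ (Fin d),
    (φ (Lam D x (x + z)) - φ x - (if ‖z‖ < a then ⟪z, gradient φ x⟫ else 0))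
      * ‖z‖ ^ (-(d : ℝ) - α)

/-! Near `x₀ ∈ D` and for small `z`, the point `x + z` stays in `D`, so `Λ(x, x + z) = x + z`
and Taylor's formula bounds the numerator of the integrand by `C ‖z‖²`; for the remaining `z`
the numerator is bounded since `φ` is bounded on the compact set `closure D` and `∇φ` is locally
bounded. This gives a majorant `C₁ ‖z‖^(2-d-α)` near `0`, `C₂ ‖z‖^(-d-α)` away from `0`, uniform
in `x` near `x₀` and integrable exactly because `0 < α < 2`. Integrability follows, and so does
continuity by dominated convergence, once one knows that `(y, z) ↦ Λ(y, z)` is continuous at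
every `y ∈ D`: lower semicontinuity of `lamT` comes from convexity (points between an
interior point and a point of `closure D` are interior), upper semicontinuity from compactness of
the remaining part of the segment. Finally, changing the truncation level adds to the integrand
an odd integrable function of `z`, whose integral vanishes. -/

open Filter Topology

section RadialIntegrability

variable {E : Type*} [NormedAddCommGroup E] [NormedSpace ℝ E] [FiniteDimensional ℝ E]
  [MeasurableSpace E] [BorelSpace E] [Nontrivial E] (μ : Measure E) [μ.IsAddHaarMeasure]

open Module

lemma rpow_natSub_one_mul_rpow {n : ℕ} (hn : 1 ≤ n) {y : ℝ} (hy : 0 < y) (s : ℝ) :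
    y ^ (n - 1) * y ^ s = y ^ ((n : ℝ) - 1 + s) := by
  rw [← Real.rpow_natCast, ← Real.rpow_add hy, Nat.cast_sub hn, Nat.cast_one]

lemma integrableOn_ball_norm_rpow {s : ℝ} (hs : -(finrank ℝ E : ℝ) < s) (r : ℝ) :
    IntegrableOn (fun x : E => ‖x‖ ^ s) (ball 0 r) μ := by
  rw [integrableOn_fun_norm_addHaar μ (f := fun y => y ^ s)]
  rcases le_or_gt r 0 with hr | hr
  · simp [Ioo_eq_empty_of_le hr]
  refine ((intervalIntegral.integrableOn_Ioo_rpow_iff hr).2 (by linarith :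
    -1 < (finrank ℝ E : ℝ) - 1 + s)).congr_fun (fun y hy => ?_) measurableSet_Ioo
  rw [smul_eq_mul, rpow_natSub_one_mul_rpow finrank_pos hy.1]

lemma integrableOn_compl_ball_norm_rpow {s : ℝ} (hs : s < -(finrank ℝ E : ℝ)) {r : ℝ}
    (hr : 0 < r) : IntegrableOn (fun x : E => ‖x‖ ^ s) (ball 0 r)ᶜ μ := by
  have hind : (ball (0 : E) r)ᶜ.indicator (fun x => ‖x‖ ^ s) =
      fun x => (Ici r).indicator (fun y : ℝ => y ^ s) ‖x‖ := by
    ext x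
    simp [indicator]
  rw [← integrable_indicator_iff measurableSet_ball.compl, hind, integrable_fun_norm_addHaar]
  have htail : IntegrableOn (fun y : ℝ => y ^ ((finrank ℝ E : ℝ) - 1 + s)) (Ici r) := by
    rw [integrableOn_Ici_iff_integrableOn_Ioi]
    exact integrableOn_Ioi_rpow_of_lt (by linarith) hr
  refine (integrable_indicator_iff measurableSet_Ici |>.2 htail).integrableOn.congr_fun
    (fun y (hy : 0 < y) => ?_) measurableSet_Ioi
  by_cases hyr : r ≤ y
  · simp [indicator, hyr, rpow_natSub_one_mul_rpow finrank_pos hy]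
  · simp [indicator, hyr]

lemma integrable_ite_norm_rpow {r : ℝ} (hr : 0 < r) (C₁ C₂ : ℝ) {s₁ s₂ : ℝ}
    (hs₁ : -(finrank ℝ E : ℝ) < s₁) (hs₂ : s₂ < -(finrank ℝ E : ℝ)) :
    Integrable (fun x : E => if ‖x‖ < r then C₁ * ‖x‖ ^ s₁ else C₂ * ‖x‖ ^ s₂) μ := by
  classical
  have h := Integrable.piecewise measurableSet_ball
    ((integrableOn_ball_norm_rpow μ hs₁ r).const_mul C₁)
    ((integrableOn_compl_ball_norm_rpow μ hs₂ hr).const_mul C₂)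
  refine h.congr (ae_of_all _ fun x => ?_)
  simp [Set.piecewise]

end RadialIntegrability

lemma sq_mul_rpow_le_rpow {t : ℝ} (ht : 0 ≤ t) (s : ℝ) : t ^ 2 * t ^ s ≤ t ^ (2 + s) := by
  rcases ht.eq_or_lt with rfl | ht
  · simpa using Real.rpow_nonneg le_rfl _
  · rw [Real.rpow_add ht, Real.rpow_two]

lemma integral_eq_zero_of_odd {G : Type*} [MeasurableSpace G] [AddGroup G] [MeasurableNeg G]
    (μ : Measure G) [μ.IsNegInvariant] {f : G → ℝ} (hf : ∀ z, f (-z) = -f z) :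
    ∫ z, f z ∂μ = 0 := by
  have h := integral_neg_eq_self f μ
  simp only [hf, integral_neg] at h
  linarith

lemma ContDiffAt.exists_norm_sub_sub_fderiv_le {E F : Type*} [NormedAddCommGroup E]
    [NormedSpace ℝ E] [NormedAddCommGroup F] [NormedSpace ℝ F] {f : E → F} {x₀ : E}
    (hf : ContDiffAt ℝ 2 f x₀) :
    ∃ r > 0, ∃ C ≥ 0, ∀ x ∈ ball x₀ r, ∀ y ∈ ball x₀ r,
      ‖f y - f x - fderiv ℝ f x (y - x)‖ ≤ C * ‖y - x‖ ^ 2 := by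
  obtain ⟨K, t, ht, hK⟩ := (hf.fderiv_right (m := 1) (by norm_num)).exists_lipschitzOnWith
  have hdiff : ∀ᶠ x in 𝓝 x₀, DifferentiableAt ℝ f x :=
    (hf.eventually (by simp)).mono fun x hx => hx.differentiableAt (by norm_num)
  obtain ⟨r, hr, hball⟩ := Metric.mem_nhds_iff.1 (inter_mem ht hdiff)
  refine ⟨r, hr, K, K.coe_nonneg, fun x hx y hy => ?_⟩
  have hseg : segment ℝ x y ⊆ t ∩ {x | DifferentiableAt ℝ f x} :=
    ((convex_ball x₀ r).segment_subset hx hy).trans hball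
  have hbound : ∀ w ∈ segment ℝ x y, ‖fderiv ℝ f w - fderiv ℝ f x‖ ≤ K * ‖y - x‖ := by
    intro w hw
    calc ‖fderiv ℝ f w - fderiv ℝ f x‖ ≤ K * ‖w - x‖ :=
          hK.norm_sub_le (hseg hw).1 (hseg (left_mem_segment ℝ x y)).1
      _ ≤ K * ‖y - x‖ := by
          gcongr
          exact norm_sub_le_of_mem_segment hw
  calc ‖f y - f x - fderiv ℝ f x (y - x)‖ ≤ K * ‖y - x‖ * ‖y - x‖ :=
        (convex_segment x y).norm_image_sub_le_of_norm_fderiv_le' (fun w hw => (hseg hw).2)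
          hbound (left_mem_segment ℝ x y) (right_mem_segment ℝ x y)
    _ = K * ‖y - x‖ ^ 2 := by ring

section ExitPoint

variable {d : ℕ} {D : Set (EuclideanSpace ℝ (Fin d))} {y z : EuclideanSpace ℝ (Fin d)}

lemma lamT_nonneg : 0 ≤ lamT D y z :=
  Real.sSup_nonneg fun _ ht => ht.1.1

lemma lamT_le_one : lamT D y z ≤ 1 :=
  Real.sSup_le (fun _ ht => ht.1.2) zero_le_one

lemma le_lamT {t : ℝ} (ht : t ∈ Icc (0 : ℝ) 1) (hmem : y + t • (z - y) ∈ closure D) :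
    t ≤ lamT D y z :=
  le_csSup ⟨1, fun _ hs => hs.1.2⟩ ⟨ht, hmem⟩

lemma lamT_le {b : ℝ} (hb : 0 ≤ b)
    (h : ∀ t ∈ Icc (0 : ℝ) 1, y + t • (z - y) ∈ closure D → t ≤ b) : lamT D y z ≤ b :=
  Real.sSup_le (fun t ht => h t ht.1 ht.2) hb

lemma Lam_mem_closure (hy : y ∈ closure D) : Lam D y z ∈ closure D := by
  have hcompact : IsCompact {t : ℝ | t ∈ Icc (0 : ℝ) 1 ∧ y + t • (z - y) ∈ closure D} :=
    isCompact_Icc.inter_right (isClosed_closure.preimage (by fun_prop))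
  exact (hcompact.sSup_mem ⟨0, ⟨le_rfl, zero_le_one⟩, by simpa using hy⟩).2

lemma Lam_of_mem_closure (hz : z ∈ closure D) : Lam D y z = z := by
  have h1 : lamT D y z = 1 :=
    le_antisymm lamT_le_one (le_lamT ⟨zero_le_one, le_rfl⟩ (by simpa using hz))
  simp [Lam, h1]

lemma eventually_lt_lamT (hD : Convex ℝ D) (hy : y ∈ interior D) {b : ℝ}
    (hb : b < lamT D y z) : ∀ᶠ p in 𝓝 (y, z), b < lamT D p.1 p.2 := by
  rcases lt_or_ge b 0 with hb0 | hb0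
  · exact Eventually.of_forall fun _ => hb0.trans_le lamT_nonneg
  set L := lamT D y z
  obtain ⟨t, hbt, htL⟩ := exists_between hb
  have hL : 0 < L := hb0.trans_lt hb
  have hcombo : (1 - t / L) • y + (t / L) • Lam D y z = y + t • (z - y) := by
    rw [Lam, smul_add, smul_smul, div_mul_cancel₀ _ hL.ne']
    module
  have hint : y + t • (z - y) ∈ interior D := by
    rw [← hcombo]
    refine hD.combo_interior_closure_mem_interior hy (Lam_mem_closure (interior_subset_closure hy))
      ?_ (div_nonneg (by linarith) hL.le) (by ring)
    linarith [(div_lt_one hL).2 htL]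
  have hcont : ContinuousAt (fun p : _ × _ => p.1 + t • (p.2 - p.1)) (y, z) := by fun_prop
  filter_upwards [hcont.eventually_mem (isOpen_interior.mem_nhds hint)] with p hp
  exact hbt.trans_le (le_lamT ⟨by linarith, htL.le.trans lamT_le_one⟩
    (interior_subset_closure hp))

lemma eventually_lamT_lt {b : ℝ} (hb : lamT D y z < b) :
    ∀ᶠ p in 𝓝 (y, z), lamT D p.1 p.2 < b := by
  rcases lt_or_ge 1 b with hb1 | hb1
  · exact Eventually.of_forall fun _ => lamT_le_one.trans_lt hb1
  obtain ⟨t₀, hLt₀, ht₀b⟩ := exists_between hb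
  have hout : ∀ t ∈ Icc t₀ 1, ∀ᶠ q in 𝓝 ((y, z), t),
      q.1.1 + q.2 • (q.1.2 - q.1.1) ∈ (closure D)ᶜ := by
    intro t ht
    have hnot : y + t • (z - y) ∉ closure D := fun hmem =>
      (hLt₀.trans_le ht.1).not_ge (le_lamT ⟨lamT_nonneg.trans (hLt₀.trans_le ht.1).le, ht.2⟩ hmem)
    exact ContinuousAt.eventually_mem (by fun_prop) (isClosed_closure.isOpen_compl.mem_nhds hnot)
  filter_upwards [isCompact_Icc.eventually_forall_of_forall_eventually
    (P := fun p (t : ℝ) => p.1 + t • (p.2 - p.1) ∈ (closure D)ᶜ) hout] with p hp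
  refine (lamT_le (lamT_nonneg.trans hLt₀.le) fun t ht hmem => ?_).trans_lt ht₀b
  by_contra! h
  exact hp t ⟨h.le, ht.2⟩ hmem

lemma continuousAt_lamT (hD : Convex ℝ D) (hy : y ∈ interior D) :
    ContinuousAt (fun p : _ × _ => lamT D p.1 p.2) (y, z) :=
  tendsto_order.2 ⟨fun _ hb => eventually_lt_lamT hD hy hb, fun _ hb => eventually_lamT_lt hb⟩

lemma continuousAt_Lam (hD : Convex ℝ D) (hy : y ∈ interior D) :
    ContinuousAt (fun p : _ × _ => Lam D p.1 p.2) (y, z) :=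
  continuousAt_fst.add ((continuousAt_lamT hD hy).smul (continuousAt_snd.sub continuousAt_fst))

end ExitPoint

section FractionalOperator

variable {d : ℕ} {D : Set (EuclideanSpace ℝ (Fin d))} {α a : ℝ}
  {φ : EuclideanSpace ℝ (Fin d) → ℝ} {x₀ x y z : EuclideanSpace ℝ (Fin d)}

def Lintegrand (D : Set (EuclideanSpace ℝ (Fin d))) (α a : ℝ)
    (φ : EuclideanSpace ℝ (Fin d) → ℝ) (x z : EuclideanSpace ℝ (Fin d)) : ℝ :=
  (φ (Lam D x (x + z)) - φ x - (if ‖z‖ < a then ⟪z, gradient φ x⟫ else 0))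
    * ‖z‖ ^ (-(d : ℝ) - α)

lemma Lintegrand_eq :
    Lintegrand D α a φ x z = (φ (Lam D x (x + z)) - φ x - (if ‖z‖ < a then fderiv ℝ φ x z else 0))
      * ‖z‖ ^ (-(d : ℝ) - α) := by
  simp [Lintegrand, inner_gradient_right]

lemma continuousAt_comp_Lam (hD : Convex ℝ D) (hφ : ContinuousOn φ (closure D))
    (hy : y ∈ interior D) : ContinuousAt (fun p : _ × _ => φ (Lam D p.1 p.2)) (y, z) := by
  have hmem : ∀ᶠ p : _ × _ in 𝓝 (y, z), Lam D p.1 p.2 ∈ closure D :=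
    (continuousAt_fst.eventually_mem (isOpen_interior.mem_nhds hy)).mono fun p hp =>
      Lam_mem_closure (interior_subset_closure hp)
  exact (hφ _ (Lam_mem_closure (interior_subset_closure hy))).tendsto.comp
    (tendsto_nhdsWithin_iff.2 ⟨continuousAt_Lam hD hy, hmem⟩)

lemma aestronglyMeasurable_Lintegrand (hD : Convex ℝ D) (hφ : ContinuousOn φ (closure D))
    (hx : x ∈ interior D) : AEStronglyMeasurable (Lintegrand D α a φ x) := by
  have hcont : Continuous fun z => φ (Lam D x (x + z)) :=
    continuous_iff_continuousAt.2 fun z =>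
      (continuousAt_comp_Lam hD hφ hx).comp (f := fun z => (x, x + z)) (by fun_prop)
  refine Measurable.aestronglyMeasurable (Measurable.mul ?_ (by fun_prop))
  exact (hcont.measurable.sub measurable_const).sub <| Measurable.ite
    (measurableSet_lt measurable_norm measurable_const) (by fun_prop) measurable_const

lemma exists_norm_Lintegrand_le (hop : IsOpen D) (hbd : IsBounded D)
    (hφc : ContinuousOn φ (closure D)) (hφ2 : ContDiffOn ℝ 2 φ D) (hx₀ : x₀ ∈ D) :
    ∃ r > 0, ∃ C₁ C₂ : ℝ, ∀ x ∈ ball x₀ r, ∀ z, ‖Lintegrand D α 1 φ x z‖ ≤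
      if ‖z‖ < r then C₁ * ‖z‖ ^ (2 - (d : ℝ) - α) else C₂ * ‖z‖ ^ (-(d : ℝ) - α) := by
  obtain ⟨M, hM⟩ := hbd.isCompact_closure.exists_bound_of_continuousOn hφc
  obtain ⟨r₀, hr₀, C, hC₀, hC⟩ :=
    (hφ2.contDiffAt (hop.mem_nhds hx₀)).exists_norm_sub_sub_fderiv_le
  set G := ‖fderiv ℝ φ x₀‖ + 1
  have hfderiv : ContinuousAt (fderiv ℝ φ) x₀ :=
    (hφ2.continuousOn_fderiv_of_isOpen hop (by norm_num)).continuousAt (hop.mem_nhds hx₀)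
  obtain ⟨r₁, hr₁, hball⟩ := Metric.eventually_nhds_iff_ball.1 <|
    (hop.eventually_mem hx₀).and (hfderiv.norm.eventually (gt_mem_nhds (lt_add_one _)))
  set r := min (min r₀ r₁) 1 / 2 with hr_def
  have hr : 0 < r := by positivity
  have h2r : 2 * r ≤ min r₀ r₁ := by linarith [min_le_left (min r₀ r₁) 1]
  have hr1 : r < 1 := by linarith [min_le_right (min r₀ r₁) 1]
  refine ⟨r, hr, C, 2 * M + G, fun x hx z => ?_⟩
  have hx' : x ∈ ball x₀ (2 * r) := ball_subset_ball (by linarith) hx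
  obtain ⟨hxD, hxG⟩ := hball x (ball_subset_ball (h2r.trans (min_le_right _ _)) hx')
  have hk : 0 ≤ ‖z‖ ^ (-(d : ℝ) - α) := by positivity
  rw [Lintegrand_eq, norm_mul, Real.norm_of_nonneg hk]
  by_cases hz : ‖z‖ < r
  · rw [if_pos hz]
    have hxz : x + z ∈ ball x₀ (2 * r) := by
      rw [mem_ball] at hx ⊢
      calc dist (x + z) x₀ ≤ dist x x₀ + ‖z‖ := by
            simpa [dist_eq_norm, add_sub_right_comm] using norm_add_le (x - x₀) z
        _ < 2 * r := by linarith
    have hxzD := (hball _ (ball_subset_ball (h2r.trans (min_le_right _ _)) hxz)).1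
    have hsub : ball x₀ (2 * r) ⊆ ball x₀ r₀ := ball_subset_ball (h2r.trans (min_le_left _ _))
    rw [Lam_of_mem_closure (subset_closure hxzD), if_pos (hz.trans hr1)]
    calc ‖φ (x + z) - φ x - fderiv ℝ φ x z‖ * ‖z‖ ^ (-(d : ℝ) - α)
        ≤ C * ‖z‖ ^ 2 * ‖z‖ ^ (-(d : ℝ) - α) := by
          gcongr
          simpa using hC x (hsub hx') (x + z) (hsub hxz)
      _ ≤ C * ‖z‖ ^ (2 - (d : ℝ) - α) := by
          rw [mul_assoc, show (2 : ℝ) - d - α = 2 + (-(d : ℝ) - α) by ring]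
          gcongr
          exact sq_mul_rpow_le_rpow (norm_nonneg z) _
  · rw [if_neg hz]
    gcongr
    have hlin : ‖(if ‖z‖ < 1 then fderiv ℝ φ x z else 0)‖ ≤ G := by
      split_ifs with hz1
      · calc ‖fderiv ℝ φ x z‖ ≤ ‖fderiv ℝ φ x‖ * ‖z‖ := (fderiv ℝ φ x).le_opNorm z
          _ ≤ G * 1 := by gcongr
          _ = G := mul_one G
      · simp only [norm_zero]
        positivity
    calc ‖φ (Lam D x (x + z)) - φ x - (if ‖z‖ < 1 then fderiv ℝ φ x z else 0)‖
        ≤ ‖φ (Lam D x (x + z))‖ + ‖φ x‖ + ‖(if ‖z‖ < 1 then fderiv ℝ φ x z else 0)‖ :=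
          norm_sub_le_of_le (norm_sub_le _ _) le_rfl
      _ ≤ M + M + G := by
          gcongr
          · exact hM _ (Lam_mem_closure (subset_closure hxD))
          · exact hM _ (subset_closure hxD)
      _ = 2 * M + G := by ring

lemma integrable_Lintegrand_majorant (hd : 1 ≤ d) (hα : α ∈ Ioo (0 : ℝ) 2) {r : ℝ} (hr : 0 < r)
    (C₁ C₂ : ℝ) : Integrable fun z : EuclideanSpace ℝ (Fin d) =>
      if ‖z‖ < r then C₁ * ‖z‖ ^ (2 - (d : ℝ) - α) else C₂ * ‖z‖ ^ (-(d : ℝ) - α) := by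
  have : Nontrivial (EuclideanSpace ℝ (Fin d)) :=
    Module.nontrivial_of_finrank_pos (R := ℝ) (by rw [finrank_euclideanSpace_fin]; exact hd)
  exact integrable_ite_norm_rpow volume hr C₁ C₂ (by simp; linarith [hα.2])
    (by simp; linarith [hα.1])

lemma continuousAt_Lintegrand (hD : Convex ℝ D) (hop : IsOpen D)
    (hφc : ContinuousOn φ (closure D)) (hφ1 : ContDiffOn ℝ 1 φ D) (hx₀ : x₀ ∈ D) (a : ℝ)
    (z : EuclideanSpace ℝ (Fin d)) : ContinuousAt (fun x => Lintegrand D α a φ x z) x₀ := by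
  have hΛ : ContinuousAt (fun x => φ (Lam D x (x + z))) x₀ :=
    (continuousAt_comp_Lam hD hφc (hop.interior_eq.symm ▸ hx₀)).comp
      (f := fun x => (x, x + z)) (by fun_prop)
  have hφx : ContinuousAt φ x₀ := (hφ1.contDiffAt (hop.mem_nhds hx₀)).continuousAt
  have hfderiv : ContinuousAt (fderiv ℝ φ) x₀ :=
    (hφ1.continuousOn_fderiv_of_isOpen hop le_rfl).continuousAt (hop.mem_nhds hx₀)
  simp only [Lintegrand_eq]
  refine ((hΛ.sub hφx).sub ?_).mul continuousAt_const
  by_cases hz : ‖z‖ < a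
  · simpa [hz] using hfderiv.clm_apply continuousAt_const
  · simpa [hz] using continuousAt_const

lemma continuousAt_Lgen (hd : 1 ≤ d) (hα : α ∈ Ioo (0 : ℝ) 2) (hD : Convex ℝ D)
    (hop : IsOpen D) (hbd : IsBounded D) (hφc : ContinuousOn φ (closure D))
    (hφ2 : ContDiffOn ℝ 2 φ D) (hx₀ : x₀ ∈ D) : ContinuousAt (Lgen D α 1 φ) x₀ := by
  obtain ⟨r, hr, C₁, C₂, hbound⟩ := exists_norm_Lintegrand_le (α := α) hop hbd hφc hφ2 hx₀
  refine continuousAt_of_dominated (F := Lintegrand D α 1 φ) ?_ ?_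
    (integrable_Lintegrand_majorant hd hα hr C₁ C₂)
    (ae_of_all _ (continuousAt_Lintegrand hD hop hφc (hφ2.of_le one_le_two) hx₀ 1))
  · filter_upwards [hop.mem_nhds hx₀] with x hx using
      aestronglyMeasurable_Lintegrand hD hφc (hop.interior_eq.symm ▸ hx)
  · filter_upwards [ball_mem_nhds x₀ hr] with x hx using ae_of_all _ (hbound x hx)

lemma integrable_sub_truncation (hd : 1 ≤ d) (hα : α ∈ Ioo (0 : ℝ) 2) {a b : ℝ} (ha : 0 < a)
    (hb : 0 < b) (v : EuclideanSpace ℝ (Fin d)) :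
    Integrable fun z : EuclideanSpace ℝ (Fin d) =>
      ((if ‖z‖ < b then ⟪z, v⟫ else 0) - (if ‖z‖ < a then ⟪z, v⟫ else 0)) *
        ‖z‖ ^ (-(d : ℝ) - α) := by
  refine (integrable_Lintegrand_majorant hd hα (lt_min ha hb) 0 (‖v‖ * max a b)).mono' ?_
    (ae_of_all _ fun z => ?_)
  · refine Measurable.aestronglyMeasurable (Measurable.mul ?_ (by fun_prop))
    exact .sub (.ite (measurableSet_lt measurable_norm measurable_const) (by fun_prop)
      measurable_const) (.ite (measurableSet_lt measurable_norm measurable_const) (by fun_prop)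
      measurable_const)
  rw [norm_mul, Real.norm_of_nonneg (Real.rpow_nonneg (norm_nonneg z) _)]
  rcases lt_or_ge ‖z‖ (min a b) with hmin | hmin
  · simp [(lt_min_iff.1 hmin).1, (lt_min_iff.1 hmin).2]
  rw [if_neg hmin.not_gt]
  gcongr
  have hmax : 0 ≤ ‖v‖ * max a b := mul_nonneg (norm_nonneg v) (ha.le.trans (le_max_left a b))
  have hinner : ‖z‖ < max a b → ‖⟪z, v⟫‖ ≤ ‖v‖ * max a b := fun h =>
    calc ‖⟪z, v⟫‖ ≤ ‖z‖ * ‖v‖ := norm_inner_le_norm z v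
      _ ≤ ‖v‖ * max a b := by rw [mul_comm]; gcongr
  by_cases hzb : ‖z‖ < b <;> by_cases hza : ‖z‖ < a
  · simpa [hzb, hza] using hmax
  · simpa [hzb, hza] using hinner (lt_max_of_lt_right hzb)
  · simpa [hzb, hza] using hinner (lt_max_of_lt_left hza)
  · simpa [hzb, hza] using hmax

lemma Lgen_eq_of_integrable (hd : 1 ≤ d) (hα : α ∈ Ioo (0 : ℝ) 2) {a b : ℝ} (ha : 0 < a)
    (hb : 0 < b) (hint : Integrable (Lintegrand D α b φ x)) :
    Lgen D α a φ x = Lgen D α b φ x := by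
  set v := gradient φ x
  set g : EuclideanSpace ℝ (Fin d) → ℝ := fun z =>
    ((if ‖z‖ < b then ⟪z, v⟫ else 0) - (if ‖z‖ < a then ⟪z, v⟫ else 0)) * ‖z‖ ^ (-(d : ℝ) - α)
  have hsplit : Lintegrand D α a φ x = Lintegrand D α b φ x + g := by
    ext z
    simp only [Lintegrand, g, Pi.add_apply]
    ring
  have hodd : ∀ z, g (-z) = -g z := by
    intro z
    by_cases hzb : ‖z‖ < b <;> by_cases hza : ‖z‖ < a <;> simp [g, hzb, hza]
  change ∫ z, Lintegrand D α a φ x z = ∫ z, Lintegrand D α b φ x z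
  rw [hsplit, integral_add' hint (integrable_sub_truncation hd hα ha hb v),
    integral_eq_zero_of_odd volume hodd, add_zero]

end FractionalOperator

theorem stmt_3_general (d : ℕ) (hd : 2 ≤ d) (α : ℝ) (hα : α ∈ Set.Ioo (0 : ℝ) 2)
    (D : Set (EuclideanSpace ℝ (Fin d)))
    (hop : IsOpen D) (hbd : IsBounded D) (hconv : Convex ℝ D)
    (φ : EuclideanSpace ℝ (Fin d) → ℝ)
    (hφc : ContinuousOn φ (closure D)) (hφ2 : ContDiffOn ℝ 2 φ D) :
    (∀ x ∈ D, Integrable (fun z : EuclideanSpace ℝ (Fin d) =>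
        (φ (Lam D x (x + z)) - φ x - (if ‖z‖ < 1 then ⟪z, gradient φ x⟫ else 0))
          * ‖z‖ ^ (-(d : ℝ) - α))) ∧
    ContinuousOn (Lgen D α 1 φ) D ∧
    (∀ a : ℝ, 0 < a → ∀ x ∈ D, Lgen D α a φ x = Lgen D α 1 φ x) := by
  have hd1 : 1 ≤ d := one_le_two.trans hd
  have hint : ∀ x ∈ D, Integrable (Lintegrand D α 1 φ x) := fun x hx => by
    obtain ⟨r, hr, C₁, C₂, hbound⟩ := exists_norm_Lintegrand_le (α := α) hop hbd hφc hφ2 hx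
    exact (integrable_Lintegrand_majorant hd1 hα hr C₁ C₂).mono'
      (aestronglyMeasurable_Lintegrand hconv hφc (hop.interior_eq.symm ▸ hx))
      (ae_of_all _ (hbound x (mem_ball_self hr)))
  exact ⟨hint,
    fun x hx => (continuousAt_Lgen hd1 hα hconv hop hbd hφc hφ2 hx).continuousWithinAt,
    fun a ha x hx => Lgen_eq_of_integrable hd1 hα ha one_pos (hint x hx)⟩

/-- for `D ⊂ ℝ^d` nonempty open bounded strictly convex and
`φ ∈ C(closure D) ∩ C²(D)`: (i) the integrand defining `𝓛φ(x)` is Lebesgue-integrable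
for every `x ∈ D`; (ii) `x ↦ 𝓛φ(x)` is continuous on `D`; (iii) replacing the
truncation `1_{|z|<1}` by `1_{|z|<a}` (`a > 0`) does not change the value of `𝓛φ(x)`. -/
theorem stmt_3 (d : ℕ) (hd : 2 ≤ d) (α : ℝ) (hα : α ∈ Set.Ioo (0 : ℝ) 2)
    (D : Set (EuclideanSpace ℝ (Fin d)))
    (hne : D.Nonempty) (hop : IsOpen D) (hbd : IsBounded D) (hconv : Convex ℝ D)
    (hstrict : ∀ a b : EuclideanSpace ℝ (Fin d), a ≠ b → ¬ segment ℝ a b ⊆ frontier D)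
    (φ : EuclideanSpace ℝ (Fin d) → ℝ)
    (hφc : ContinuousOn φ (closure D)) (hφ2 : ContDiffOn ℝ 2 φ D) :
    (∀ x ∈ D, Integrable (fun z : EuclideanSpace ℝ (Fin d) =>
        (φ (Lam D x (x + z)) - φ x - (if ‖z‖ < 1 then ⟪z, gradient φ x⟫ else 0))
          * ‖z‖ ^ (-(d : ℝ) - α))) ∧
    ContinuousOn (Lgen D α 1 φ) D ∧
    (∀ a : ℝ, 0 < a → ∀ x ∈ D, Lgen D α a φ x = Lgen D α 1 φ x) :=
  stmt_3_general d hd α hα D hop hbd hconv φ hφc hφ2
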